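/- Let the data (a_1,…,a_n) with labels (y_1,…,y_n) be separable with margin μ > 0, and let R := max_{i∈[n]} ‖a_i‖. Consider the Normalized Batch Perceptron iterates started from θ̂₀ = 0: for t ≥ 0, let S_t := {i ∈ [n] : y_i a_iᵀθ̂_t ≤ 0}; if S_t ≠ ∅ set θ̂_{t+1} = θ̂_t + (1/|S_t|) Σ_{i∈S_t} y_i a_i, and θ̂_{t+1} = θ̂_t otherwise. Then there exists t with 0 ≤ t ≤ R²/μ² such that S_t = ∅, i.e., Normalized Batch Perceptron solves the classification task after at most R²/μ² iterations. -/

import Mathlib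

open scoped RealInnerProductSpace BigOperators

/-!
Novikoff's argument. Each normalized batch update is the average of the vectors `y i • a i` over
the misclassified samples, so it lies in every convex set containing them: it has inner product at
least `μ` with `θstar`, makes a non-acute angle with the current iterate, and has norm at most `R`.
While the classification fails, after `t` steps `t μ ≤ ⟪θ_t, θstar⟫ ≤ ‖θ_t‖` and
`‖θ_t‖² ≤ t R²`, whence `t ≤ R² / μ²`.
-/

open Finset

theorem Convex.inv_card_smul_sum_mem {𝕜 E ι : Type*} [Field 𝕜] [LinearOrder 𝕜]
    [IsStrictOrderedRing 𝕜] [AddCommGroup E] [Module 𝕜 E] {s : Set E} (hs : Convex 𝕜 s)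
    {S : Finset ι} (hS : S.Nonempty) {v : ι → E} (hv : ∀ i ∈ S, v i ∈ s) :
    (S.card : 𝕜)⁻¹ • ∑ i ∈ S, v i ∈ s := by
  have h := hs.centerMass_mem (t := S) (w := fun _ => (1 : 𝕜)) (fun _ _ => zero_le_one)
    (by simpa using hS) hv
  simpa [centerMass] using h

section Increments

variable {E : Type*} [NormedAddCommGroup E] [InnerProductSpace ℝ E]

theorem natCast_mul_le_inner_of_increments {θ : ℕ → E} (h0 : θ 0 = 0) {w : E} {μ : ℝ} {t : ℕ}
    (hinc : ∀ s < t, μ ≤ ⟪θ (s + 1) - θ s, w⟫) : t * μ ≤ ⟪θ t, w⟫ := by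
  induction t with
  | zero => simp [h0]
  | succ t ih =>
    have hstep := hinc t t.lt_succ_self
    rw [inner_sub_left] at hstep
    push_cast
    linarith [ih fun s hs => hinc s (hs.trans t.lt_succ_self)]

theorem sq_norm_le_of_increments {θ : ℕ → E} (h0 : θ 0 = 0) {R : ℝ} {t : ℕ}
    (hinc : ∀ s < t, ⟪θ s, θ (s + 1) - θ s⟫ ≤ 0 ∧ ‖θ (s + 1) - θ s‖ ≤ R) :
    ‖θ t‖ ^ 2 ≤ t * R ^ 2 := by
  induction t with
  | zero => simp [h0]
  | succ t ih =>
    obtain ⟨hobtuse, hnorm⟩ := hinc t t.lt_succ_self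
    have hsq : ‖θ (t + 1) - θ t‖ ^ 2 ≤ R ^ 2 := pow_le_pow_left₀ (norm_nonneg _) hnorm 2
    have hexpand : ‖θ (t + 1)‖ ^ 2
        = ‖θ t‖ ^ 2 + 2 * ⟪θ t, θ (t + 1) - θ t⟫ + ‖θ (t + 1) - θ t‖ ^ 2 := by
      rw [← norm_add_sq_real, add_sub_cancel]
    push_cast
    linarith [ih fun s hs => hinc s (hs.trans t.lt_succ_self)]

theorem natCast_le_div_sq_of_sq_mul_le {t : ℕ} {μ R : ℝ} (hμ : 0 < μ)
    (h : ((t : ℝ) * μ) ^ 2 ≤ t * R ^ 2) : (t : ℝ) ≤ R ^ 2 / μ ^ 2 := by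
  rcases t.eq_zero_or_pos with rfl | ht
  · simp only [Nat.cast_zero]; positivity
  · have ht' : (0 : ℝ) < t := by exact_mod_cast ht
    rw [le_div_iff₀ (by positivity)]
    nlinarith

theorem natCast_le_div_sq_of_increments {θ : ℕ → E} (h0 : θ 0 = 0) {w : E} (hw : ‖w‖ ≤ 1)
    {μ R : ℝ} (hμ : 0 < μ) {t : ℕ}
    (hinc : ∀ s < t, μ ≤ ⟪θ (s + 1) - θ s, w⟫ ∧ ⟪θ s, θ (s + 1) - θ s⟫ ≤ 0 ∧
      ‖θ (s + 1) - θ s‖ ≤ R) :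
    (t : ℝ) ≤ R ^ 2 / μ ^ 2 := by
  have hinner := natCast_mul_le_inner_of_increments h0 fun s hs => (hinc s hs).1
  have hsq := sq_norm_le_of_increments h0 fun s hs => (hinc s hs).2
  have hnorm : (t : ℝ) * μ ≤ ‖θ t‖ :=
    calc (t : ℝ) * μ ≤ ⟪θ t, w⟫ := hinner
      _ ≤ ‖θ t‖ * ‖w‖ := real_inner_le_norm _ _
      _ ≤ ‖θ t‖ := mul_le_of_le_one_right (norm_nonneg _) hw
  refine natCast_le_div_sq_of_sq_mul_le hμ (le_trans ?_ hsq)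
  exact pow_le_pow_left₀ (by positivity) hnorm 2

end Increments

theorem exists_natCast_le_of_bounded_failures {P : ℕ → Prop} {B : ℝ}
    (h : ∀ t : ℕ, (∀ s < t, ¬ P s) → (t : ℝ) ≤ B) : ∃ t : ℕ, (t : ℝ) ≤ B ∧ P t := by
  classical
  have hex : ∃ t, P t := by
    by_contra! hnever
    obtain ⟨N, hN⟩ := exists_nat_gt B
    exact (h N fun s _ => hnever s).not_gt hN
  exact ⟨Nat.find hex, h _ fun s hs => Nat.find_min hex hs, Nat.find_spec hex⟩

noncomputable section Perceptron

variable {E ι : Type*} [NormedAddCommGroup E] [InnerProductSpace ℝ E] [Fintype ι]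

def misclassified (a : ι → E) (y : ι → ℝ) (θ : E) : Finset ι :=
  univ.filter fun i => y i * ⟪a i, θ⟫ ≤ 0

def batchUpdate (a : ι → E) (y : ι → ℝ) (θ : E) : E :=
  ((misclassified a y θ).card : ℝ)⁻¹ • ∑ i ∈ misclassified a y θ, y i • a i

theorem misclassified_eq_empty_iff {a : ι → E} {y : ι → ℝ} {θ : E} :
    misclassified a y θ = ∅ ↔ ∀ i, 0 < y i * ⟪a i, θ⟫ := by
  simp [misclassified, Finset.filter_eq_empty_iff]

variable {a : ι → E} {y : ι → ℝ} {θ : E}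

theorem le_inner_batchUpdate (hne : (misclassified a y θ).Nonempty) {w : E} {μ : ℝ}
    (hmargin : ∀ i, μ ≤ y i * ⟪a i, w⟫) : μ ≤ ⟪batchUpdate a y θ, w⟫ := by
  rw [real_inner_comm]
  refine (convex_halfSpace_ge (innerₛₗ ℝ w).isLinear μ).inv_card_smul_sum_mem hne fun i _ => ?_
  simpa [real_inner_smul_right, real_inner_comm] using hmargin i

theorem inner_batchUpdate_nonpos (hne : (misclassified a y θ).Nonempty) :
    ⟪θ, batchUpdate a y θ⟫ ≤ 0 := by
  refine (convex_halfSpace_le (innerₛₗ ℝ θ).isLinear 0).inv_card_smul_sum_mem hne fun i hi => ?_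
  simpa [misclassified, real_inner_smul_right, real_inner_comm] using hi

theorem norm_batchUpdate_le (hne : (misclassified a y θ).Nonempty) {R : ℝ}
    (hR : ∀ i, ‖y i • a i‖ ≤ R) : ‖batchUpdate a y θ‖ ≤ R :=
  mem_closedBall_zero_iff.mp <| (convex_closedBall (0 : E) R).inv_card_smul_sum_mem hne
    fun i _ => mem_closedBall_zero_iff.mpr (hR i)

end Perceptron

theorem normalized_batch_perceptron_converges {d n : ℕ}
    (a : Fin n → EuclideanSpace ℝ (Fin d)) (y : Fin n → ℝ)
    (hy : ∀ i, y i = 1 ∨ y i = -1)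
    (μ R : ℝ) (hμ : 0 < μ)
    (θstar : EuclideanSpace ℝ (Fin d)) (hstar : ‖θstar‖ = 1)
    (hmargin : ∀ i, μ ≤ y i * ⟪a i, θstar⟫)
    (hR : IsGreatest (Set.range fun i => ‖a i‖) R)
    (θhat : ℕ → EuclideanSpace ℝ (Fin d))
    (h0 : θhat 0 = 0)
    (hstep : ∀ t, (Finset.univ.filter (fun i => y i * ⟪a i, θhat t⟫ ≤ 0)).Nonempty →
      θhat (t + 1) = θhat t +
        (((Finset.univ.filter (fun i => y i * ⟪a i, θhat t⟫ ≤ 0)).card : ℝ))⁻¹ •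
          ∑ i ∈ Finset.univ.filter (fun i => y i * ⟪a i, θhat t⟫ ≤ 0), y i • a i) :
    ∃ t : ℕ, (t : ℝ) ≤ R ^ 2 / μ ^ 2 ∧ ∀ i, 0 < y i * ⟪a i, θhat t⟫ := by
  have hnorm : ∀ i, ‖y i • a i‖ ≤ R := fun i => by
    rcases hy i with h | h <;> simpa [h, norm_smul] using hR.2 ⟨i, rfl⟩
  have hupdate : ∀ t, (misclassified a y (θhat t)).Nonempty →
      θhat (t + 1) - θhat t = batchUpdate a y (θhat t) := fun t hne => by
    rw [hstep t hne, add_sub_cancel_left]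
    rfl
  obtain ⟨t, ht, hsolved⟩ : ∃ t : ℕ, (t : ℝ) ≤ R ^ 2 / μ ^ 2 ∧ misclassified a y (θhat t) = ∅ :=
    exists_natCast_le_of_bounded_failures fun t hfail => by
      refine natCast_le_div_sq_of_increments h0 hstar.le hμ fun s hs => ?_
      have hne := Finset.nonempty_iff_ne_empty.mpr (hfail s hs)
      rw [hupdate s hne]
      exact ⟨le_inner_batchUpdate hne hmargin, inner_batchUpdate_nonpos hne,
        norm_batchUpdate_le hne hnorm⟩
  exact ⟨t, ht, misclassified_eq_empty_iff.mp hsolved⟩
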